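/- If H is a pivotal Hopf algebra, i.e. there exists a grouplike element g ∈ H with S²(h) = g h g^{-1} for all h, then exp₀(H) = exp(H). -/

import Mathlib

open TensorProduct

noncomputable section

variable (k H : Type*) [CommRing k] [Ring H] [Bialgebra k H]

/-- Convolution product `f * g = m ∘ (f ⊗ g) ∘ Δ` on linear endomorphisms. -/
def conv (f g : Module.End k H) : Module.End k H :=
  LinearMap.mul' k H ∘ₗ TensorProduct.map f g ∘ₗ Coalgebra.comul

/-- The convolution unit `u ∘ ε`. -/
def convOne : Module.End k H := (Algebra.linearMap k H) ∘ₗ Coalgebra.counit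

/-- `convSeq F n = m_n ∘ (F 0 ⊗ F 1 ⊗ ⋯ ⊗ F (n-1)) ∘ Δ_n` (as an iterated convolution). -/
def convSeq : (ℕ → Module.End k H) → ℕ → Module.End k H
  | _, 0 => convOne k H
  | F, n + 1 => conv k H (F 0) (convSeq (fun j => F (j + 1)) n)

/-- The `n`-th Sweedler power `[n] = m_n ∘ Δ_n` as a linear endomorphism. -/
def sweedlerPow (n : ℕ) : Module.End k H := convSeq k H (fun _ => LinearMap.id) n

/-- The twisted Sweedler power `m_n ∘ (id ⊗ T ⊗ T² ⊗ ⋯ ⊗ T^(n-1)) ∘ Δ_n`. -/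
def twistPow (T : Module.End k H) (n : ℕ) : Module.End k H :=
  convSeq k H (fun j => T ^ j) n

/-- `exp₀(H)`: the least `n ≥ 1` with `[n] = u ∘ ε`, in `ℕ ∪ {∞}` (`sInf ∅ = ∞`). -/
def exp0 : ℕ∞ :=
  sInf {e : ℕ∞ | ∃ n : ℕ, e = n ∧ 0 < n ∧ sweedlerPow k H n = convOne k H}

/-- The `T`-twisted exponent: least `n ≥ 1` with
`m_n ∘ (id ⊗ T ⊗ ⋯ ⊗ T^(n-1)) ∘ Δ_n = u ∘ ε`, in `ℕ ∪ {∞}`.  For `T = S⁻²` this is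
`exp(H)` and for `T = S^(2i)` this is the twisted exponent `exp_{2i}(H)`. -/
def expAt (T : Module.End k H) : ℕ∞ :=
  sInf {e : ℕ∞ | ∃ n : ℕ, e = n ∧ 0 < n ∧ twistPow k H T n = convOne k H}

/-! If `S²` is conjugation by the grouplike `g`, then `T = S⁻²` is `y ↦ g⁻¹ y g` and the twisted
Sweedler power telescopes: `x₁ T(x₂) ⋯ Tⁿ⁻¹(xₙ) = x₁ g⁻¹ x₂ g⁻¹ ⋯ g⁻¹ xₙ gⁿ⁻¹ = [n](x g⁻¹) gⁿ`,
because `g⁻¹` is grouplike too. Evaluating at `g` shows that either of `[n] = uε` and its twisted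
analogue forces `gⁿ = 1`; then the twisted power is `[n]` precomposed with the
counit-preserving bijection `x ↦ x g⁻¹`, so the two conditions agree for every `n`. -/

namespace Coalgebra.Repr

variable {k H ι : Type*} [CommRing k] [Ring H] [Bialgebra k H]

@[simps]
def mulGroupLike {x : H} (r : Coalgebra.Repr k x ι) {a : H} (ha : IsGroupLikeElem k a) :
    Coalgebra.Repr k (x * a) ι where
  index := r.index
  left i := r.left i * a
  right i := r.right i * a
  eq := by
    rw [Bialgebra.comul_mul, ha.comul_eq_tmul_self, ← r.eq, Finset.sum_mul]
    simp only [Algebra.TensorProduct.tmul_mul_tmul]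

end Coalgebra.Repr

section Pivotal

variable {k H}

lemma conv_apply_repr (f p : Module.End k H) {x : H} {ι : Type*} (r : Coalgebra.Repr k x ι) :
    conv k H f p x = ∑ i ∈ r.index, f (r.left i) * p (r.right i) :=
  r.convMul_apply (WithConv.toConv f) (WithConv.toConv p)

lemma convOne_apply (x : H) : convOne k H x = algebraMap k H (Coalgebra.counit x) := rfl

lemma sweedlerPow_succ (n : ℕ) :
    sweedlerPow k H (n + 1) = conv k H LinearMap.id (sweedlerPow k H n) := rfl

lemma conv_apply_of_isGroupLikeElem (f p : Module.End k H) {a : H} (ha : IsGroupLikeElem k a) :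
    conv k H f p a = f a * p a := by
  simp [conv, ha.comul_eq_tmul_self]

lemma sweedlerPow_apply_of_isGroupLikeElem {a : H} (ha : IsGroupLikeElem k a) (n : ℕ) :
    sweedlerPow k H n a = a ^ n := by
  induction n with
  | zero => rw [sweedlerPow, convSeq, convOne_apply, ha.counit_eq_one, map_one, pow_zero]
  | succ n ih =>
    rw [sweedlerPow_succ, conv_apply_of_isGroupLikeElem _ _ ha, ih, LinearMap.id_apply, pow_succ']

lemma sweedlerPow_apply_one (n : ℕ) : sweedlerPow k H n 1 = 1 := by
  rw [sweedlerPow_apply_of_isGroupLikeElem .one, one_pow]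

lemma convOne_apply_mul_of_isGroupLikeElem (x : H) {a : H} (ha : IsGroupLikeElem k a) :
    convOne k H (x * a) = convOne k H x := by
  rw [convOne_apply, convOne_apply, Bialgebra.counit_mul, ha.counit_eq_one, mul_one]

lemma pow_eq_one_of_sweedlerPow_eq_convOne {a : H} (ha : IsGroupLikeElem k a) {n : ℕ}
    (h : sweedlerPow k H n = convOne k H) : a ^ n = 1 := by
  rw [← sweedlerPow_apply_of_isGroupLikeElem ha, h, convOne_apply, ha.counit_eq_one, map_one]

variable (u : Hˣ)

lemma pow_apply_of_eq_conj (T : Module.End k H) (hT : ∀ y, T y = ↑u⁻¹ * y * ↑u) (j : ℕ) (y : H) :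
    (T ^ j) y = ↑(u ^ j)⁻¹ * y * ↑(u ^ j) := by
  induction j with
  | zero => simp
  | succ j ih =>
    rw [pow_succ' T, Module.End.mul_apply, ih, hT, pow_succ u, mul_inv_rev, Units.val_mul,
      Units.val_mul]
    simp only [mul_assoc]

variable {u} (hu : IsGroupLikeElem k (u : H))
include hu

lemma convSeq_apply_of_eq_conj (n : ℕ) (F : ℕ → Module.End k H) (s : ℕ)
    (hF : ∀ j y, F j y = ↑(u ^ (j + s))⁻¹ * y * ↑(u ^ (j + s))) (x : H) :
    convSeq k H F n x = ↑(u ^ s)⁻¹ * sweedlerPow k H n (x * ↑u⁻¹) * ↑(u ^ (n + s)) := by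
  induction n generalizing F s x with
  | zero =>
    rw [convSeq, sweedlerPow, convSeq, zero_add,
      convOne_apply_mul_of_isGroupLikeElem _ hu.unitsInv, convOne_apply, mul_assoc,
      Algebra.commutes, Units.inv_mul_cancel_left]
  | succ n ih =>
    have hshift : (↑(u ^ s) : H) * ↑(u ^ (s + 1))⁻¹ = ↑u⁻¹ := by
      rw [← Units.val_mul]; congr 1; group
    let r := Coalgebra.Repr.arbitrary k x
    rw [convSeq, sweedlerPow_succ, conv_apply_repr _ _ r,
      conv_apply_repr _ _ (r.mulGroupLike hu.unitsInv), Finset.mul_sum, Finset.sum_mul]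
    refine Finset.sum_congr rfl fun i _ => ?_
    rw [ih _ (s + 1) (fun j y => by rw [hF, add_right_comm j 1 s, add_assoc]), hF]
    simp only [Coalgebra.Repr.mulGroupLike_left, Coalgebra.Repr.mulGroupLike_right,
      LinearMap.id_apply, zero_add, show n + (s + 1) = n + 1 + s by ring]
    simp only [mul_assoc, ← hshift]

lemma twistPow_apply_eq_sweedlerPow (T : Module.End k H) (hT : ∀ y, T y = ↑u⁻¹ * y * ↑u)
    (n : ℕ) (x : H) : twistPow k H T n x = sweedlerPow k H n (x * ↑u⁻¹) * ↑(u ^ n) := by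
  simpa [twistPow] using convSeq_apply_of_eq_conj hu n _ 0
    (fun j y => by rw [add_zero]; exact pow_apply_of_eq_conj u T hT j y) x

lemma pow_eq_one_of_twistPow_eq_convOne (T : Module.End k H) (hT : ∀ y, T y = ↑u⁻¹ * y * ↑u)
    {n : ℕ} (h : twistPow k H T n = convOne k H) : (u : H) ^ n = 1 := by
  have hu_n := twistPow_apply_eq_sweedlerPow hu T hT n u
  rwa [h, convOne_apply, hu.counit_eq_one, map_one, Units.mul_inv, sweedlerPow_apply_one,
    one_mul, Units.val_pow_eq_pow_val, eq_comm] at hu_n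

lemma twistPow_eq_convOne_iff_of_pow_eq_one (T : Module.End k H)
    (hT : ∀ y, T y = ↑u⁻¹ * y * ↑u) {n : ℕ} (hun : (u : H) ^ n = 1) :
    twistPow k H T n = convOne k H ↔ sweedlerPow k H n = convOne k H := by
  have htwist := twistPow_apply_eq_sweedlerPow hu T hT n
  simp only [Units.val_pow_eq_pow_val, hun, mul_one] at htwist
  constructor
  · intro ht
    ext y
    rw [← Units.mul_inv_cancel_right y u, ← htwist, ht,
      convOne_apply_mul_of_isGroupLikeElem _ hu, Units.mul_inv_cancel_right]
  · intro hs
    ext x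
    rw [htwist, hs, convOne_apply_mul_of_isGroupLikeElem _ hu.unitsInv]

lemma twistPow_eq_convOne_iff (T : Module.End k H) (hT : ∀ y, T y = ↑u⁻¹ * y * ↑u) (n : ℕ) :
    twistPow k H T n = convOne k H ↔ sweedlerPow k H n = convOne k H :=
  ⟨fun ht => (twistPow_eq_convOne_iff_of_pow_eq_one hu T hT
      (pow_eq_one_of_twistPow_eq_convOne hu T hT ht)).1 ht,
    fun hs => (twistPow_eq_convOne_iff_of_pow_eq_one hu T hT
      (pow_eq_one_of_sweedlerPow_eq_convOne hu hs)).2 hs⟩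

end Pivotal

theorem stmt11_general (k H : Type*) [Field k] [Ring H] [HopfAlgebra k H]
    (g g' : H)
    (hgrp : Coalgebra.comul (R := k) g = g ⊗ₜ[k] g)
    (hcou : Coalgebra.counit (R := k) g = 1)
    (hgg' : g * g' = 1) (hg'g : g' * g = 1)
    (hpiv : ∀ h : H, HopfAlgebra.antipode (R := k) (HopfAlgebra.antipode (R := k) h)
      = g * h * g')
    (T : Module.End k H)
    (hT1 : T ∘ₗ ((HopfAlgebra.antipode (R := k) (A := H)) ∘ₗ HopfAlgebra.antipode (R := k)) =
      LinearMap.id) :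
    exp0 k H = expAt k H T := by
  let u : Hˣ := ⟨g, g', hgg', hg'g⟩
  have hu : IsGroupLikeElem k (u : H) := ⟨hcou, hgrp⟩
  have hT : ∀ y, T y = ↑u⁻¹ * y * ↑u := fun y => by
    have hconj : g * (g' * y * g) * g' = y := by
      simp only [mul_assoc, hgg', mul_one, ← mul_assoc g g', one_mul]
    have hS2 := LinearMap.congr_fun hT1 (g' * y * g)
    rwa [LinearMap.comp_apply, LinearMap.comp_apply, hpiv, hconj, LinearMap.id_apply] at hS2
  simp only [exp0, expAt, twistPow_eq_convOne_iff hu T hT]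

/-- if `H` is pivotal, i.e. `S²` is conjugation by a grouplike element `g`,
then `exp₀(H) = exp(H)` (where `exp(H) = expAt k H T` for `T` the inverse of `S²`). -/
theorem stmt11 (k H : Type*) [Field k] [Ring H] [HopfAlgebra k H]
    (g g' : H)
    (hgrp : Coalgebra.comul (R := k) g = g ⊗ₜ[k] g)
    (hcou : Coalgebra.counit (R := k) g = 1)
    (hgg' : g * g' = 1) (hg'g : g' * g = 1)
    (hpiv : ∀ h : H, HopfAlgebra.antipode (R := k) (HopfAlgebra.antipode (R := k) h)
      = g * h * g')
    (T : Module.End k H)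
    (hT1 : T ∘ₗ ((HopfAlgebra.antipode (R := k) (A := H)) ∘ₗ HopfAlgebra.antipode (R := k)) =
      LinearMap.id)
    (hT2 : ((HopfAlgebra.antipode (R := k) (A := H)) ∘ₗ HopfAlgebra.antipode (R := k)) ∘ₗ T =
      LinearMap.id) :
    exp0 k H = expAt k H T :=
  stmt11_general k H g g' hgrp hcou hgg' hg'g hpiv T hT1
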